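/- For every natural number n, the number of occurrences of the letter white in the word σ^n([white]) equals the Fibonacci number Fib(2n+1), and the number of occurrences of the letter black in σ^n([white]) equals the Fibonacci number Fib(2n); that is, at level n of the Fibonacci tree rooted at a white node there are exactly Fib(2n+1) white nodes and Fib(2n) black nodes. -/
import Mathlib

/-- Colours: `false` = white, `true` = black. The Fibonacci substitution on letters:
σ(white) = [white, black, white], σ(black) = [black, white]. -/
def fibSubLetter : Bool → List Bool
  | false => [false, true, false]
  | true  => [true, false]

/-- The Fibonacci substitution extended to words by concatenation. -/
def fibSub (w : List Bool) : List Bool := w.flatMap fibSubLetter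

lemma fibSub_count (w : List Bool) :
    (w.flatMap fibSubLetter).count false = 2 * w.count false + w.count true ∧
    (w.flatMap fibSubLetter).count true = w.count false + w.count true := by
  induction w with
  | nil => simp
  | cons a t ih =>
    cases a <;>
      simp only [List.flatMap_cons, List.count_append, List.count_cons,
        fibSubLetter, ih.1, ih.2, List.count_nil, beq_iff_eq, reduceIte] <;> split_ifs <;> first | omega | simp_all

/-- At level `n` of the Fibonacci tree rooted at a white node there are exactly
`Fib(2n+1)` white nodes and `Fib(2n)` black nodes. -/
theorem fibWord_count_white_black (n : ℕ) :
    (fibSub^[n] [false]).count false = Nat.fib (2 * n + 1) ∧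
    (fibSub^[n] [false]).count true = Nat.fib (2 * n) := by
  induction n with
  | zero => simp
  | succ n ih =>
    rw [Function.iterate_succ_apply']
    obtain ⟨h1, h2⟩ := fibSub_count (fibSub^[n] [false])
    rw [show ((fibSub^[n] [false]).flatMap fibSubLetter) = fibSub (fibSub^[n] [false]) from rfl] at h1 h2
    rw [ih.1, ih.2] at h1 h2
    have e1 : 2 * (n + 1) + 1 = (2 * n + 1) + 2 := by ring
    have e2 : 2 * (n + 1) = (2 * n) + 2 := by ring
    rw [h1, h2, e1, e2]
    simp only [Nat.fib_add_two]
    constructor <;> omega
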